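/- Suppose L satisfies the curvature–dimension condition CD(n,−K) for some K ≥ 0. Then the function Z = X − Y satisfies the fundamental differential inequality (A − ∂_t)Z ≥ (2/N)·Z² − 2K·U·(Z + Y) at every point of (0,∞) × ℝ^d. -/

import Mathlib

noncomputable section

open Real Set Filter

abbrev Esp (d : ℕ) := EuclideanSpace ℝ (Fin d)

/-- The Euclidean Laplacian, acting in the space variable. -/
def lap {d : ℕ} (h : Esp d → ℝ) (x : Esp d) : ℝ :=
  ∑ i, fderiv ℝ (fun y => fderiv ℝ h y (EuclideanSpace.single i (1:ℝ))) x
    (EuclideanSpace.single i (1:ℝ))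

/-- The operator `L h = Δ h + ⟨V, ∇h⟩`. -/
def Lop {d : ℕ} (V : Esp d → Esp d) (h : Esp d → ℝ) (x : Esp d) : ℝ :=
  lap h x + (inner ℝ (V x) (gradient h x) : ℝ)

/-- `Γ₂(h) = (1/2) L(|∇h|²) − ⟨∇h, ∇(Lh)⟩`. -/
def Gamma2 {d : ℕ} (V : Esp d → Esp d) (h : Esp d → ℝ) (x : Esp d) : ℝ :=
  (1/2) * Lop V (fun y => ‖gradient h y‖^2) x
    - (inner ℝ (gradient h x) (gradient (Lop V h) x) : ℝ)

/-- Curvature–dimension condition `CD(n, −K)` for `L = Δ + V·∇`: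
`Γ₂(h) ≥ (1/n)(Lh)² − K|∇h|²` for every smooth `h`. -/
def CD {d : ℕ} (V : Esp d → Esp d) (n K : ℝ) : Prop :=
  ∀ h : Esp d → ℝ, ContDiff ℝ (⊤ : ℕ∞) h →
    ∀ x, Gamma2 V h x ≥ (1/n) * (Lop V h x)^2 - K * ‖gradient h x‖^2

/-- The operator `A h = U·Lh + 2m⟨∇f, ∇h⟩` (at a fixed time, with coefficient
functions `Ut = U(t,·)` and `ft = f(t,·)`). -/
def Aop {d : ℕ} (V : Esp d → Esp d) (m : ℝ) (Ut ft h : Esp d → ℝ) (x : Esp d) : ℝ :=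
  Ut x * Lop V h x + 2*m*(inner ℝ (gradient ft x) (gradient h x) : ℝ)

/-! ### Auxiliary lemmas -/

section Helpers
variable {E' : Type*} [NormedAddCommGroup E'] [NormedSpace ℝ E']

lemma contDiffAt_fderiv_apply {G : E' → ℝ} {p : E'} (h : ContDiffAt ℝ (⊤ : ℕ∞) G p) (w : E') :
    ContDiffAt ℝ (⊤ : ℕ∞) (fun q => fderiv ℝ G q w) p :=
  (h.fderiv_right (by simp)).clm_apply contDiffAt_const

lemma fderiv_swap {G : E' → ℝ} {p : E'} (hG : ContDiffAt ℝ (⊤ : ℕ∞) G p) (w w' : E') :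
    fderiv ℝ (fun q => fderiv ℝ G q w') p w = fderiv ℝ (fun q => fderiv ℝ G q w) p w' := by
  have hsym := hG.isSymmSndFDerivAt (by simp only [minSmoothness_of_isRCLikeNormedField]; exact WithTop.coe_le_coe.mpr le_top)
  have hdf : DifferentiableAt ℝ (fderiv ℝ G) p :=
    (hG.fderiv_right (m := 1) (WithTop.coe_le_coe.mpr le_top)).differentiableAt (by simp)
  have h1 : ∀ v : E', fderiv ℝ (fun q => fderiv ℝ G q v) p
      = (fderiv ℝ (fderiv ℝ G) p).flip v := by
    intro v
    rw [fderiv_clm_apply hdf (differentiableAt_const v)]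
    ext w0
    simp
  rw [h1, h1]
  exact hsym w w'

end Helpers

section Grad
variable {d : ℕ}

lemma inner_gradient_eq (h : Esp d → ℝ) (x v : Esp d) :
    (inner ℝ (gradient h x) v : ℝ) = fderiv ℝ h x v := by
  rw [gradient, ← InnerProductSpace.toDual_apply_apply, LinearIsometryEquiv.apply_symm_apply]

lemma inner_grad_right (h : Esp d → ℝ) (x v : Esp d) :
    (inner ℝ v (gradient h x) : ℝ) = fderiv ℝ h x v := by
  rw [real_inner_comm]; exact inner_gradient_eq h x v

lemma inner_gradients (g h : Esp d → ℝ) (x : Esp d) :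
    (inner ℝ (gradient g x) (gradient h x) : ℝ)
      = ∑ i, fderiv ℝ g x (EuclideanSpace.single i (1:ℝ))
          * fderiv ℝ h x (EuclideanSpace.single i (1:ℝ)) := by
  rw [← OrthonormalBasis.sum_inner_mul_inner (EuclideanSpace.basisFun (Fin d) ℝ)]
  refine Finset.sum_congr rfl fun i _ => ?_
  rw [EuclideanSpace.basisFun_apply, inner_gradient_eq, inner_grad_right]

lemma norm_gradient_sq (h : Esp d → ℝ) (x : Esp d) :
    ‖gradient h x‖^2
      = ∑ i, fderiv ℝ h x (EuclideanSpace.single i (1:ℝ))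
          * fderiv ℝ h x (EuclideanSpace.single i (1:ℝ)) := by
  rw [← real_inner_self_eq_norm_sq]; exact inner_gradients h h x

end Grad

section LapCalc
variable {d : ℕ} {g h : Esp d → ℝ}

lemma contDiff_fderiv_apply (hh : ContDiff ℝ (⊤ : ℕ∞) h) (w : Esp d) :
    ContDiff ℝ (⊤ : ℕ∞) (fun y => fderiv ℝ h y w) := by
  rw [contDiff_iff_contDiffAt]
  intro y
  exact (hh.contDiffAt.fderiv_right (by simp)).clm_apply contDiffAt_const

lemma lap_fun_add (hg : ContDiff ℝ (⊤ : ℕ∞) g) (hh : ContDiff ℝ (⊤ : ℕ∞) h) (x : Esp d) :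
    lap (fun y => g y + h y) x = lap g x + lap h x := by
  unfold lap
  rw [← Finset.sum_add_distrib]
  refine Finset.sum_congr rfl fun i _ => ?_
  set w := EuclideanSpace.single i (1:ℝ)
  have e1 : (fun y => fderiv ℝ (fun z => g z + h z) y w)
      = fun y => fderiv ℝ g y w + fderiv ℝ h y w := by
    funext y
    rw [fderiv_fun_add (hg.differentiable (by simp) y) (hh.differentiable (by simp) y)]
    simp
  rw [e1, fderiv_fun_add ((contDiff_fderiv_apply hg w).differentiable (by simp) x)
    ((contDiff_fderiv_apply hh w).differentiable (by simp) x)]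
  simp

lemma lap_fun_const_mul (hh : ContDiff ℝ (⊤ : ℕ∞) h) (c : ℝ) (x : Esp d) :
    lap (fun y => c * h y) x = c * lap h x := by
  unfold lap
  rw [Finset.mul_sum]
  refine Finset.sum_congr rfl fun i _ => ?_
  set w := EuclideanSpace.single i (1:ℝ)
  have e1 : (fun y => fderiv ℝ (fun z => c * h z) y w)
      = fun y => c * fderiv ℝ h y w := by
    funext y
    rw [fderiv_const_mul (hh.differentiable (by simp) y) c]
    simp
  rw [e1, fderiv_const_mul ((contDiff_fderiv_apply hh w).differentiable (by simp) x) c]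
  simp

lemma lap_fun_const (c : ℝ) (x : Esp d) : lap (fun _ => c) x = 0 := by
  unfold lap
  have : ∀ i : Fin d, fderiv ℝ (fun y : Esp d =>
      fderiv ℝ (fun _ : Esp d => c) y (EuclideanSpace.single i (1:ℝ))) x
      (EuclideanSpace.single i (1:ℝ)) = 0 := by
    intro i
    have e1 : (fun y : Esp d => fderiv ℝ (fun _ : Esp d => c) y
        (EuclideanSpace.single i (1:ℝ))) = fun _ => (0:ℝ) := by
      funext y; rw [fderiv_fun_const]; simp
    rw [e1, fderiv_fun_const]; simp
  simp [this]

lemma lap_fun_mul (hg : ContDiff ℝ (⊤ : ℕ∞) g) (hh : ContDiff ℝ (⊤ : ℕ∞) h) (x : Esp d) :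
    lap (fun y => g y * h y) x
      = g x * lap h x + h x * lap g x
        + 2 * ∑ i, fderiv ℝ g x (EuclideanSpace.single i (1:ℝ))
            * fderiv ℝ h x (EuclideanSpace.single i (1:ℝ)) := by
  unfold lap
  rw [Finset.mul_sum, Finset.mul_sum, Finset.mul_sum, ← Finset.sum_add_distrib,
    ← Finset.sum_add_distrib]
  refine Finset.sum_congr rfl fun i _ => ?_
  set w := EuclideanSpace.single i (1:ℝ) with hw
  have e1 : (fun y => fderiv ℝ (fun z => g z * h z) y w)
      = fun y => g y * fderiv ℝ h y w + h y * fderiv ℝ g y w := by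
    funext y
    rw [fderiv_fun_mul (hg.differentiable (by simp) y) (hh.differentiable (by simp) y)]
    simp [mul_comm]
  rw [e1, fderiv_fun_add ((hg.differentiable (by simp) x).fun_mul
      ((contDiff_fderiv_apply hh w).differentiable (by simp) x))
      ((hh.differentiable (by simp) x).fun_mul
      ((contDiff_fderiv_apply hg w).differentiable (by simp) x)),
    fderiv_fun_mul (hg.differentiable (by simp) x)
      ((contDiff_fderiv_apply hh w).differentiable (by simp) x),
    fderiv_fun_mul (hh.differentiable (by simp) x)
      ((contDiff_fderiv_apply hg w).differentiable (by simp) x)]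
  simp only [ContinuousLinearMap.add_apply, ContinuousLinearMap.smul_apply, smul_eq_mul]
  ring

end LapCalc

section LopCalc
variable {d : ℕ} {V : Esp d → Esp d} {g h : Esp d → ℝ}

lemma Lop_eq (V : Esp d → Esp d) (h : Esp d → ℝ) (x : Esp d) :
    Lop V h x = lap h x + fderiv ℝ h x (V x) := by
  rw [Lop, inner_grad_right]

lemma Lop_fun_add (hg : ContDiff ℝ (⊤ : ℕ∞) g) (hh : ContDiff ℝ (⊤ : ℕ∞) h) (x : Esp d) :
    Lop V (fun y => g y + h y) x = Lop V g x + Lop V h x := by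
  rw [Lop_eq, Lop_eq, Lop_eq, lap_fun_add hg hh,
    fderiv_fun_add (hg.differentiable (by simp) x) (hh.differentiable (by simp) x)]
  simp; ring

lemma Lop_fun_const_mul (hh : ContDiff ℝ (⊤ : ℕ∞) h) (c : ℝ) (x : Esp d) :
    Lop V (fun y => c * h y) x = c * Lop V h x := by
  rw [Lop_eq, Lop_eq, lap_fun_const_mul hh,
    fderiv_const_mul (hh.differentiable (by simp) x) c]
  simp; ring

lemma Lop_fun_const (c : ℝ) (x : Esp d) : Lop V (fun _ => c) x = 0 := by
  rw [Lop_eq, lap_fun_const, fderiv_fun_const]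
  simp

lemma Lop_fun_mul (hg : ContDiff ℝ (⊤ : ℕ∞) g) (hh : ContDiff ℝ (⊤ : ℕ∞) h) (x : Esp d) :
    Lop V (fun y => g y * h y) x
      = g x * Lop V h x + h x * Lop V g x
        + 2 * ∑ i, fderiv ℝ g x (EuclideanSpace.single i (1:ℝ))
            * fderiv ℝ h x (EuclideanSpace.single i (1:ℝ)) := by
  rw [Lop_eq, Lop_eq, Lop_eq, lap_fun_mul hg hh,
    fderiv_fun_mul (hg.differentiable (by simp) x) (hh.differentiable (by simp) x)]
  simp only [ContinuousLinearMap.add_apply, ContinuousLinearMap.smul_apply, smul_eq_mul]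
  ring

lemma contDiff_lap (hh : ContDiff ℝ (⊤ : ℕ∞) h) : ContDiff ℝ (⊤ : ℕ∞) (lap h) := by
  unfold lap
  apply ContDiff.sum
  intro i _
  exact contDiff_fderiv_apply (contDiff_fderiv_apply hh _) _

lemma contDiff_Lop (hV : ContDiff ℝ (⊤ : ℕ∞) V) (hh : ContDiff ℝ (⊤ : ℕ∞) h) :
    ContDiff ℝ (⊤ : ℕ∞) (Lop V h) := by
  have e1 : Lop V h = fun x => lap h x + fderiv ℝ h x (V x) := by
    funext x; exact Lop_eq V h x
  rw [e1]
  apply (contDiff_lap hh).add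
  rw [contDiff_iff_contDiffAt]
  intro y
  exact (hh.contDiffAt.fderiv_right (by simp)).clm_apply hV.contDiffAt

end LopCalc

section Slice
variable {d : ℕ} {G : ℝ × Esp d → ℝ} {t : ℝ} {x : Esp d}

lemma fderiv_slice (hG : DifferentiableAt ℝ G (t,x)) (v : Esp d) :
    fderiv ℝ (fun y => G (t,y)) x v = fderiv ℝ G (t,x) (0, v) := by
  have h1 : HasFDerivAt (fun y => G (t,y))
      ((fderiv ℝ G (t,x)).comp (ContinuousLinearMap.inr ℝ ℝ (Esp d))) x :=
    hG.hasFDerivAt.comp x (hasFDerivAt_prodMk_right t x)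
  rw [h1.fderiv]
  rfl

lemma hasDerivAt_slice (hG : DifferentiableAt ℝ G (t,x)) :
    HasDerivAt (fun s => G (s,x)) (fderiv ℝ G (t,x) ((1:ℝ), (0:Esp d))) t := by
  have h1 : HasFDerivAt (fun s => G (s,x))
      ((fderiv ℝ G (t,x)).comp (ContinuousLinearMap.inl ℝ ℝ (Esp d))) t :=
    hG.hasFDerivAt.comp t (hasFDerivAt_prodMk_left t x)
  have h2 := h1.hasDerivAt
  convert h2 using 1
  rfl

lemma deriv_slice (hG : DifferentiableAt ℝ G (t,x)) :
    deriv (fun s => G (s,x)) t = fderiv ℝ G (t,x) ((1:ℝ), (0:Esp d)) :=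
  (hasDerivAt_slice hG).deriv

end Slice

section Chain
variable {d : ℕ} {m : ℝ} {us : Esp d → ℝ} {y : Esp d}

lemma hasFDerivAt_fform (hus : DifferentiableAt ℝ us y)
    (hpos : 0 < us y) (hm1 : m ≠ 1) :
    HasFDerivAt (fun z => m * (us z ^ (m-1) - 1) / (m-1))
      ((m * us y ^ (m-2)) • fderiv ℝ us y) y := by
  have h1 : HasFDerivAt us (fderiv ℝ us y) y := hus.hasFDerivAt
  have h2 := h1.rpow_const (p := m-1) (Or.inl hpos.ne')
  have h3 := (h2.sub_const 1).const_mul (m/(m-1))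
  have efun : (fun z => m * (us z ^ (m-1) - 1) / (m-1))
      = fun z => (m/(m-1)) * (us z ^ (m-1) - 1) := by funext z; ring
  rw [efun]
  refine h3.congr_fderiv ?_
  rw [smul_smul]
  congr 1
  have e2 : m - 1 - 1 = m - 2 := by ring
  rw [e2]
  have hm1' : m - 1 ≠ 0 := sub_ne_zero.mpr hm1
  field_simp

lemma hasDerivAt_fform {uc : ℝ → ℝ} {s : ℝ} (hus : DifferentiableAt ℝ uc s)
    (hpos : 0 < uc s) (hm1 : m ≠ 1) :
    HasDerivAt (fun r => m * (uc r ^ (m-1) - 1) / (m-1))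
      (m * uc s ^ (m-2) * deriv uc s) s := by
  have h1 : HasDerivAt uc (deriv uc s) s := hus.hasDerivAt
  have h2 := h1.rpow_const (p := m-1) (Or.inl hpos.ne')
  have h3 := (h2.sub_const 1).const_mul (m/(m-1))
  have efun : (fun r => m * (uc r ^ (m-1) - 1) / (m-1))
      = fun r => (m/(m-1)) * (uc r ^ (m-1) - 1) := by funext r; ring
  rw [efun]
  refine h3.congr_deriv ?_
  have e2 : m - 1 - 1 = m - 2 := by ring
  rw [e2]
  have hm1' : m - 1 ≠ 0 := sub_ne_zero.mpr hm1
  field_simp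

lemma hasFDerivAt_rpow_m (hus : DifferentiableAt ℝ us y) (hpos : 0 < us y) :
    HasFDerivAt (fun z => us z ^ m) ((m * us y ^ (m-1)) • fderiv ℝ us y) y :=
  hus.hasFDerivAt.rpow_const (Or.inl hpos.ne')

end Chain

/-- Fundamental differential inequality: under `CD(n, −K)`,
`(A − ∂_t)Z ≥ (2/N)Z² − 2KU(Z + Y)` for `Z = X − Y`. -/
theorem fundamental_differential_inequality_Z
    {d : ℕ} (hd : 1 ≤ d) (V : Esp d → Esp d) (hV : ContDiff ℝ (⊤ : ℕ∞) V)
    (n : ℝ) (hn : 0 < n) (K : ℝ) (hK : 0 ≤ K)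
    (m : ℝ) (hm0 : 0 < m) (hm1 : m ≠ 1) (hmn : 1 - 2/n < m)
    (N : ℝ) (hN : 0 < N) (hNdef : 2/N = 2/n + m - 1)
    (u : ℝ → Esp d → ℝ)
    (hu_smooth : ContDiffOn ℝ (⊤ : ℕ∞) (fun p : ℝ × Esp d => u p.1 p.2) (Set.Ioi 0 ×ˢ Set.univ))
    (hu_pos : ∀ t, 0 < t → ∀ x, 0 < u t x)
    (hu_pde : ∀ t, 0 < t → ∀ x,
      deriv (fun s => u s x) t = Lop V (fun y => u t y ^ m) x)
    (hCD : CD V n K)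
    (f U X Y : ℝ → Esp d → ℝ)
    (hf : ∀ t x, f t x = m * (u t x ^ (m-1) - 1) / (m-1))
    (hU : ∀ t x, U t x = (m-1) * f t x + m)
    (hX : ∀ t x, X t x = ‖gradient (f t) x‖^2 / U t x)
    (hY : ∀ t x, Y t x = deriv (fun s => f s x) t / U t x)
    (Z : ℝ → Esp d → ℝ) (hZ : ∀ t x, Z t x = X t x - Y t x) :
    ∀ t, 0 < t → ∀ x : Esp d,
      Aop V m (U t) (f t) (Z t) x - deriv (fun s => Z s x) t
        ≥ (2/N) * (Z t x)^2 - 2*K * U t x * (Z t x + Y t x) := by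
  intro t ht x
  have hm1' : m - 1 ≠ 0 := sub_ne_zero.mpr hm1
  have hS : IsOpen ((Set.Ioi (0:ℝ)) ×ˢ (Set.univ : Set (Esp d))) := isOpen_Ioi.prod isOpen_univ
  have hUc : ∀ p : ℝ × Esp d, 0 < p.1 → ContDiffAt ℝ (⊤ : ℕ∞) (fun q : ℝ × Esp d => u q.1 q.2) p :=
    fun p hp => hu_smooth.contDiffAt (hS.mem_nhds ⟨hp, Set.mem_univ _⟩)
  -- the joint function `F(s,y) = f s y`
  have hFs : ∀ p : ℝ × Esp d, 0 < p.1 → ContDiffAt ℝ (⊤ : ℕ∞) (fun q : ℝ × Esp d => f q.1 q.2) p := by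
    intro p hp
    have e1 : (fun q : ℝ × Esp d => f q.1 q.2)
        = fun q : ℝ × Esp d => m * (u q.1 q.2 ^ (m-1) - 1) / (m-1) := by
      funext q; exact hf q.1 q.2
    rw [e1]
    exact (contDiffAt_const.mul (((hUc p hp).rpow_const_of_ne
      (hu_pos p.1 hp p.2).ne').sub contDiffAt_const)).div_const _
  have hus : ∀ s, 0 < s → ContDiff ℝ (⊤ : ℕ∞) (u s) := by
    intro s hs
    rw [contDiff_iff_contDiffAt]
    intro y
    exact (hUc (s,y) hs).comp y (contDiffAt_const.prodMk contDiffAt_id)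
  have hfs : ∀ s, 0 < s → ContDiff ℝ (⊤ : ℕ∞) (f s) := by
    intro s hs
    rw [contDiff_iff_contDiffAt]
    intro y
    exact (hFs (s,y) hs).comp y (contDiffAt_const.prodMk contDiffAt_id)
  -- spatial derivative identities
  have hdf_all : ∀ s, 0 < s → ∀ y,
      fderiv ℝ (f s) y = (m * u s y ^ (m-2)) • fderiv ℝ (u s) y := by
    intro s hs y
    have e1 : f s = fun z => m * (u s z ^ (m-1) - 1) / (m-1) := funext fun z => hf s z
    rw [e1]
    exact (hasFDerivAt_fform ((hus s hs).differentiable (by simp) y) (hu_pos s hs y) hm1).fderiv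
  have hdu_pow : ∀ s, 0 < s → ∀ y,
      fderiv ℝ (fun z => u s z ^ m) y = (m * u s y ^ (m-1)) • fderiv ℝ (u s) y :=
    fun s hs y => (hasFDerivAt_rpow_m ((hus s hs).differentiable (by simp) y) (hu_pos s hs y)).fderiv
  have hpow_split : ∀ s, 0 < s → ∀ y, u s y ^ (m-1) = u s y ^ (m-2) * u s y := by
    intro s hs y
    have e1 : m - 1 = (m-2) + 1 := by ring
    rw [e1, Real.rpow_add_one (hu_pos s hs y).ne']
  have hdum' : ∀ s, 0 < s → ∀ y (v : Esp d),
      fderiv ℝ (fun z => u s z ^ m) y v = u s y * fderiv ℝ (f s) y v := by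
    intro s hs y v
    rw [hdu_pow s hs y, hdf_all s hs y]
    simp only [ContinuousLinearMap.smul_apply, smul_eq_mul]
    rw [hpow_split s hs y]
    ring
  -- U value and positivity
  have hUval : ∀ s, 0 < s → ∀ y, U s y = m * u s y ^ (m-1) := by
    intro s hs y
    rw [hU, hf]
    field_simp
    ring
  have hUpos : ∀ s, 0 < s → ∀ y, 0 < U s y := by
    intro s hs y
    rw [hUval s hs y]
    exact mul_pos hm0 (Real.rpow_pos_of_pos (hu_pos s hs y) _)
  -- the key evolution identity for f
  have hkey : ∀ s, 0 < s → ∀ y, deriv (fun r => f r y) s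
      = (∑ i, fderiv ℝ (f s) y (EuclideanSpace.single i (1:ℝ))
            * fderiv ℝ (f s) y (EuclideanSpace.single i (1:ℝ)))
        + U s y * Lop V (f s) y := by
    intro s hs y
    have huy : DifferentiableAt ℝ (fun r => u r y) s := by
      have := ((hUc (s,y) hs).differentiableAt (by simp)).comp s
        (differentiableAt_id.prodMk (differentiableAt_const y) :
          DifferentiableAt ℝ (fun r : ℝ => (r, y)) s)
      exact this
    have e1 : (fun r => f r y) = fun r => m * (u r y ^ (m-1) - 1) / (m-1) :=
      funext fun r => hf r y
    have h2 : deriv (fun r => f r y) s = m * u s y ^ (m-2) * deriv (fun r => u r y) s := by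
      rw [e1]
      exact (hasDerivAt_fform huy (hu_pos s hs y) hm1).deriv
    have hLum : Lop V (fun z => u s z ^ m) y
        = u s y * Lop V (f s) y
          + ∑ i, fderiv ℝ (u s) y (EuclideanSpace.single i (1:ℝ))
              * fderiv ℝ (f s) y (EuclideanSpace.single i (1:ℝ)) := by
      rw [Lop_eq, Lop_eq]
      have hlap : lap (fun z => u s z ^ m) y
          = u s y * lap (f s) y
            + ∑ i, fderiv ℝ (u s) y (EuclideanSpace.single i (1:ℝ))
                * fderiv ℝ (f s) y (EuclideanSpace.single i (1:ℝ)) := by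
        unfold lap
        rw [Finset.mul_sum, ← Finset.sum_add_distrib]
        refine Finset.sum_congr rfl fun i _ => ?_
        have einner : (fun z => fderiv ℝ (fun z' => u s z' ^ m) z (EuclideanSpace.single i (1:ℝ)))
            = fun z => u s z * fderiv ℝ (f s) z (EuclideanSpace.single i (1:ℝ)) :=
          funext fun z => hdum' s hs z _
        rw [einner, fderiv_fun_mul ((hus s hs).differentiable (by simp) y)
          ((contDiff_fderiv_apply (hfs s hs) _).differentiable (by simp) y)]
        simp only [ContinuousLinearMap.add_apply, ContinuousLinearMap.smul_apply, smul_eq_mul]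
        ring
      rw [hlap, hdum' s hs y (V y)]
      ring
    have hDfi : ∀ i : Fin d, fderiv ℝ (f s) y (EuclideanSpace.single i (1:ℝ))
        = m * u s y ^ (m-2) * fderiv ℝ (u s) y (EuclideanSpace.single i (1:ℝ)) := by
      intro i
      rw [hdf_all s hs y]
      simp [smul_eq_mul]
    rw [h2, hu_pde s hs y, hLum, mul_add, hUval s hs y, hpow_split s hs y]
    have e3 : m * u s y ^ (m-2) * ∑ i, fderiv ℝ (u s) y (EuclideanSpace.single i (1:ℝ))
          * fderiv ℝ (f s) y (EuclideanSpace.single i (1:ℝ))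
        = ∑ i, fderiv ℝ (f s) y (EuclideanSpace.single i (1:ℝ))
            * fderiv ℝ (f s) y (EuclideanSpace.single i (1:ℝ)) := by
      rw [Finset.mul_sum]
      refine Finset.sum_congr rfl fun i _ => ?_
      rw [hDfi i]
      ring
    rw [e3]
    ring
  -- Z = - L f
  have hZeq : ∀ s, 0 < s → ∀ y, Z s y = -(Lop V (f s) y) := by
    intro s hs y
    rw [hZ, hX, hY, norm_gradient_sq, hkey s hs y]
    field_simp [(hUpos s hs y).ne']
    ring
  -- notation for the joint function and directions
  set Fj : ℝ × Esp d → ℝ := fun q => f q.1 q.2 with hFjdef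
  have hFj : ∀ p : ℝ × Esp d, 0 < p.1 → ContDiffAt ℝ (⊤ : ℕ∞) Fj p := hFs
  set g0 : ℝ × Esp d → ℝ := fun q => fderiv ℝ Fj q ((1:ℝ), (0:Esp d)) with hg0def
  have hg0 : ∀ p : ℝ × Esp d, 0 < p.1 → ContDiffAt ℝ (⊤ : ℕ∞) g0 p :=
    fun p hp => contDiffAt_fderiv_apply (hFj p hp) _
  -- P = time derivative of f at time t, as a spatial function
  set P : Esp d → ℝ := fun y => deriv (fun r => f r y) t with hPdef
  have hPg : ∀ y : Esp d, P y = g0 (t, y) := by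
    intro y
    exact deriv_slice ((hFj (t,y) ht).differentiableAt (by simp))
  -- expression of Lop V (f s) x through the joint function
  have hLopfs : ∀ s, 0 < s → Lop V (f s) x
      = (∑ i, fderiv ℝ (fun q => fderiv ℝ Fj q ((0:ℝ), EuclideanSpace.single i (1:ℝ))) (s,x)
            ((0:ℝ), EuclideanSpace.single i (1:ℝ)))
        + fderiv ℝ Fj (s,x) ((0:ℝ), V x) := by
    intro s hs
    rw [Lop_eq]
    congr 1
    · unfold lap
      refine Finset.sum_congr rfl fun i _ => ?_
      have einner : (fun y => fderiv ℝ (f s) y (EuclideanSpace.single i (1:ℝ)))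
          = fun y => fderiv ℝ Fj (s,y) ((0:ℝ), EuclideanSpace.single i (1:ℝ)) := by
        funext y
        exact fderiv_slice ((hFj (s,y) hs).differentiableAt (by simp)) _
      rw [einner]
      exact fderiv_slice ((contDiffAt_fderiv_apply (hFj (s,x) hs) _).differentiableAt (by simp)) _
    · exact fderiv_slice ((hFj (s,x) hs).differentiableAt (by simp)) _
  -- the time derivative of Z
  have hdtZ : deriv (fun s => Z s x) t = -(Lop V P x) := by
    have hev : (fun s => Z s x) =ᶠ[nhds t]
        fun s => -((∑ i, (fun p : ℝ × Esp d =>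
            fderiv ℝ (fun q => fderiv ℝ Fj q ((0:ℝ), EuclideanSpace.single i (1:ℝ))) p
              ((0:ℝ), EuclideanSpace.single i (1:ℝ))) (s,x))
          + fderiv ℝ Fj (s,x) ((0:ℝ), V x)) := by
      filter_upwards [Ioi_mem_nhds ht] with s hs
      rw [hZeq s hs x, hLopfs s hs]
    rw [hev.deriv_eq]
    -- differentiate the explicit formula
    have hHi : ∀ i : Fin d, HasDerivAt (fun s => (fun p : ℝ × Esp d =>
          fderiv ℝ (fun q => fderiv ℝ Fj q ((0:ℝ), EuclideanSpace.single i (1:ℝ))) p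
            ((0:ℝ), EuclideanSpace.single i (1:ℝ))) (s,x))
        (fderiv ℝ (fun p : ℝ × Esp d =>
          fderiv ℝ (fun q => fderiv ℝ Fj q ((0:ℝ), EuclideanSpace.single i (1:ℝ))) p
            ((0:ℝ), EuclideanSpace.single i (1:ℝ))) (t,x) ((1:ℝ), (0:Esp d))) t := by
      intro i
      exact hasDerivAt_slice ((contDiffAt_fderiv_apply
        (contDiffAt_fderiv_apply (hFj (t,x) ht) _) _).differentiableAt (by simp))
    have hKv : HasDerivAt (fun s => fderiv ℝ Fj (s,x) ((0:ℝ), V x))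
        (fderiv ℝ (fun p : ℝ × Esp d => fderiv ℝ Fj p ((0:ℝ), V x)) (t,x) ((1:ℝ), (0:Esp d))) t :=
      hasDerivAt_slice ((contDiffAt_fderiv_apply (hFj (t,x) ht) _).differentiableAt (by simp))
    have hsum := (HasDerivAt.fun_sum (fun i (_ : i ∈ Finset.univ) => hHi i)).fun_add hKv
    have := (hsum.fun_neg).deriv
    rw [this]
    -- now perform the derivative swaps
    have hswap1 : ∀ i : Fin d,
        fderiv ℝ (fun p : ℝ × Esp d =>
            fderiv ℝ (fun q => fderiv ℝ Fj q ((0:ℝ), EuclideanSpace.single i (1:ℝ))) p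
              ((0:ℝ), EuclideanSpace.single i (1:ℝ))) (t,x) ((1:ℝ), (0:Esp d))
        = fderiv ℝ (fun q => fderiv ℝ g0 q ((0:ℝ), EuclideanSpace.single i (1:ℝ))) (t,x)
            ((0:ℝ), EuclideanSpace.single i (1:ℝ)) := by
      intro i
      rw [fderiv_swap (contDiffAt_fderiv_apply (hFj (t,x) ht) _)
        ((1:ℝ), (0:Esp d)) ((0:ℝ), EuclideanSpace.single i (1:ℝ))]
      have hevq : (fun q => fderiv ℝ (fun q' => fderiv ℝ Fj q'
            ((0:ℝ), EuclideanSpace.single i (1:ℝ))) q ((1:ℝ), (0:Esp d)))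
          =ᶠ[nhds ((t,x) : ℝ × Esp d)]
          fun q => fderiv ℝ g0 q ((0:ℝ), EuclideanSpace.single i (1:ℝ)) := by
        filter_upwards [hS.mem_nhds ⟨ht, Set.mem_univ x⟩] with q hq
        exact fderiv_swap (hFj q hq.1) ((1:ℝ), (0:Esp d)) ((0:ℝ), EuclideanSpace.single i (1:ℝ))
      rw [hevq.fderiv_eq]
    have hswap2 : fderiv ℝ (fun p : ℝ × Esp d => fderiv ℝ Fj p ((0:ℝ), V x)) (t,x)
        ((1:ℝ), (0:Esp d)) = fderiv ℝ g0 (t,x) ((0:ℝ), V x) :=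
      fderiv_swap (hFj (t,x) ht) ((1:ℝ), (0:Esp d)) ((0:ℝ), V x)
    -- express Lop V P x through the joint function
    have hLP : Lop V P x
        = (∑ i, fderiv ℝ (fun q => fderiv ℝ g0 q ((0:ℝ), EuclideanSpace.single i (1:ℝ))) (t,x)
              ((0:ℝ), EuclideanSpace.single i (1:ℝ)))
          + fderiv ℝ g0 (t,x) ((0:ℝ), V x) := by
      have hPfun : P = fun y => g0 (t,y) := funext hPg
      rw [Lop_eq, hPfun]
      congr 1
      · unfold lap
        refine Finset.sum_congr rfl fun i _ => ?_
        have einner : (fun y => fderiv ℝ (fun y' => g0 (t,y')) y (EuclideanSpace.single i (1:ℝ)))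
            = fun y => fderiv ℝ g0 (t,y) ((0:ℝ), EuclideanSpace.single i (1:ℝ)) := by
          funext y
          exact fderiv_slice ((hg0 (t,y) ht).differentiableAt (by simp)) _
        rw [einner]
        exact fderiv_slice ((contDiffAt_fderiv_apply (hg0 (t,x) ht) _).differentiableAt (by simp)) _
      · exact fderiv_slice ((hg0 (t,x) ht).differentiableAt (by simp)) _
    rw [hLP]
    simp only [hswap1, hswap2]
  -- smoothness of the various spatial functions at time t
  have hft : ContDiff ℝ (⊤ : ℕ∞) (f t) := hfs t ht
  have hW : ContDiff ℝ (⊤ : ℕ∞) (Lop V (f t)) := contDiff_Lop hV hft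
  have hSq : ContDiff ℝ (⊤ : ℕ∞) (fun y => ∑ i, fderiv ℝ (f t) y (EuclideanSpace.single i (1:ℝ))
      * fderiv ℝ (f t) y (EuclideanSpace.single i (1:ℝ))) :=
    ContDiff.sum fun i _ => (contDiff_fderiv_apply hft _).mul (contDiff_fderiv_apply hft _)
  have hUtfun : U t = fun y => (m-1) * f t y + m := funext fun y => hU t y
  have hUt : ContDiff ℝ (⊤ : ℕ∞) (U t) := by
    rw [hUtfun]
    exact (contDiff_const.mul hft).add contDiff_const
  have hPsum : P = fun y => (∑ i, fderiv ℝ (f t) y (EuclideanSpace.single i (1:ℝ))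
      * fderiv ℝ (f t) y (EuclideanSpace.single i (1:ℝ))) + U t y * Lop V (f t) y :=
    funext fun y => hkey t ht y
  -- L applied to U t
  have hLopUt : Lop V (U t) x = (m-1) * Lop V (f t) x := by
    rw [hUtfun]
    have h1 : Lop V (fun y => (m-1) * f t y + m) x
        = Lop V (fun y => (m-1) * f t y) x + Lop V (fun _ => m) x :=
      Lop_fun_add (contDiff_const.mul hft) contDiff_const x
    rw [h1, Lop_fun_const_mul hft (m-1) x, Lop_fun_const (V := V) m x]
    ring
  have hDU : ∀ v : Esp d, fderiv ℝ (U t) x v = (m-1) * fderiv ℝ (f t) x v := by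
    intro v
    have h1 : HasFDerivAt (fun y => (m-1) * f t y + m) ((m-1) • fderiv ℝ (f t) x) x :=
      ((hft.differentiable (by simp) x).hasFDerivAt.const_mul (m-1)).add_const m
    rw [hUtfun, h1.fderiv]
    simp
  -- expansion of Lop V P
  have h1 : Lop V P x
      = Lop V (fun y => ∑ i, fderiv ℝ (f t) y (EuclideanSpace.single i (1:ℝ))
          * fderiv ℝ (f t) y (EuclideanSpace.single i (1:ℝ))) x
        + Lop V (fun y => U t y * Lop V (f t) y) x := by
    rw [hPsum]
    exact Lop_fun_add hSq (hUt.mul hW) x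
  have h2 : Lop V (fun y => U t y * Lop V (f t) y) x
      = U t x * Lop V (Lop V (f t)) x + Lop V (f t) x * Lop V (U t) x
        + 2 * ∑ i, fderiv ℝ (U t) x (EuclideanSpace.single i (1:ℝ))
            * fderiv ℝ (Lop V (f t)) x (EuclideanSpace.single i (1:ℝ)) :=
    Lop_fun_mul hUt hW x
  have hDUsum : ∑ i, fderiv ℝ (U t) x (EuclideanSpace.single i (1:ℝ))
        * fderiv ℝ (Lop V (f t)) x (EuclideanSpace.single i (1:ℝ))
      = (m-1) * ∑ i, fderiv ℝ (f t) x (EuclideanSpace.single i (1:ℝ))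
          * fderiv ℝ (Lop V (f t)) x (EuclideanSpace.single i (1:ℝ)) := by
    rw [Finset.mul_sum]
    refine Finset.sum_congr rfl fun i _ => ?_
    rw [hDU]
    ring
  -- the Γ₂ identity
  have hGam : Lop V (fun y => ∑ i, fderiv ℝ (f t) y (EuclideanSpace.single i (1:ℝ))
        * fderiv ℝ (f t) y (EuclideanSpace.single i (1:ℝ))) x
      = 2 * Gamma2 V (f t) x
        + 2 * (inner ℝ (gradient (f t) x) (gradient (Lop V (f t)) x) : ℝ) := by
    have e1 : (fun y => ‖gradient (f t) y‖^2)
        = fun y => ∑ i, fderiv ℝ (f t) y (EuclideanSpace.single i (1:ℝ))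
            * fderiv ℝ (f t) y (EuclideanSpace.single i (1:ℝ)) :=
      funext fun y => norm_gradient_sq (f t) y
    rw [Gamma2, e1]
    ring
  have hIfW : (inner ℝ (gradient (f t) x) (gradient (Lop V (f t)) x) : ℝ)
      = ∑ i, fderiv ℝ (f t) x (EuclideanSpace.single i (1:ℝ))
          * fderiv ℝ (Lop V (f t)) x (EuclideanSpace.single i (1:ℝ)) :=
    inner_gradients _ _ x
  -- the Aop terms
  have hZt : Z t = fun y => (-1) * Lop V (f t) y := funext fun y => by rw [hZeq t ht y]; ring
  have hLZt : Lop V (Z t) x = -(Lop V (Lop V (f t)) x) := by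
    rw [hZt, Lop_fun_const_mul hW (-1) x]
    ring
  have hIZt : (inner ℝ (gradient (f t) x) (gradient (Z t) x) : ℝ)
      = -(∑ i, fderiv ℝ (f t) x (EuclideanSpace.single i (1:ℝ))
          * fderiv ℝ (Lop V (f t)) x (EuclideanSpace.single i (1:ℝ))) := by
    rw [inner_gradients, hZt, ← Finset.sum_neg_distrib]
    refine Finset.sum_congr rfl fun i _ => ?_
    rw [fderiv_const_mul (hW.differentiable (by simp) x) (-1)]
    simp
  -- assembling the left-hand side
  have hLHS : Aop V m (U t) (f t) (Z t) x - deriv (fun s => Z s x) t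
      = 2 * Gamma2 V (f t) x + (m-1) * (Lop V (f t) x)^2 := by
    rw [Aop, hdtZ, hLZt, hIZt, h1, h2, hGam, hIfW, hLopUt, hDUsum]
    ring
  -- the right-hand side
  have hZtx : Z t x = -(Lop V (f t) x) := hZeq t ht x
  have hZYX : Z t x + Y t x = X t x := by rw [hZ]; ring
  have hUX : U t x * X t x = ‖gradient (f t) x‖^2 := by
    rw [hX]
    field_simp [(hUpos t ht x).ne']
  have hRHS : (2/N) * (Z t x)^2 - 2*K * U t x * (Z t x + Y t x)
      = (2/n + m - 1) * (Lop V (f t) x)^2 - 2*K*‖gradient (f t) x‖^2 := by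
    rw [hZYX, hNdef, hZtx, ← hUX]
    ring
  have hCD' := hCD (f t) hft x
  rw [ge_iff_le, hRHS, hLHS]
  have hsplit : (2 / n + m - 1) * (Lop V (f t) x) ^ 2
      = 2 * (1 / n * (Lop V (f t) x) ^ 2) + (m - 1) * (Lop V (f t) x) ^ 2 := by ring
  linarith [hCD', hsplit]
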